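/- arXiv:1707.04514 — 4 statements merged into one kernel-verified Lean document; each statement's English description precedes it below -/
import Mathlib

section
/- Under the hypotheses ρ A(θ) ρ = -A(-θ) (reversibility) and with Ā a logarithm of the monodromy Φ(1) chosen in a set Ω where exp is injective, -Ω ⊆ Ω, and ρΩρ ⊆ Ω, one has ρ Ā ρ = -Ā, and consequently exp(-Āτ) ρ = ρ exp(Āτ) for all τ ∈ ℝ. -/
/-!
Reversibility makes `τ ↦ ρ Φ(-τ) ρ`, and periodicity makes `τ ↦ Φ(τ + 1) Φ(1)⁻¹`, solutions of
`w' = A w` with value `I` at `0`; by uniqueness for linear ODEs with continuous coefficients,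
`ρ Φ(-1) ρ = Φ(1)` and `Φ(-1) = Φ(1)⁻¹`. Hence `exp (ρ (-Ā) ρ) = ρ exp(Ā)⁻¹ ρ = exp Ā`, and since
`ρ (-Ā) ρ` and `Ā` both lie in `Ω`, where `exp` is injective, `ρ Ā ρ = -Ā`.
-/

open Matrix NormedSpace Set

attribute [local instance] Matrix.normedAddCommGroup Matrix.normedSpace

theorem ODE_solution_unique_of_continuous_linear {E : Type*} [NormedAddCommGroup E]
    [NormedSpace ℝ E] {A : ℝ → E →L[ℝ] E} (hA : Continuous A) {f g : ℝ → E}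
    (hf : ∀ t, HasDerivAt f (A t (f t)) t) (hg : ∀ t, HasDerivAt g (A t (g t)) t)
    {t₀ : ℝ} (heq : f t₀ = g t₀) : f = g := by
  funext t
  set I := Ioo (min t t₀ - 1) (max t t₀ + 1)
  obtain ⟨K, hK⟩ : BddAbove ((fun s => ‖A s‖₊) '' Icc (min t t₀ - 1) (max t t₀ + 1)) :=
    (isCompact_Icc.image hA.nnnorm).bddAbove
  have hlip : ∀ s ∈ I, LipschitzOnWith K (A s) univ := fun s hs =>
    ((A s).lipschitz.weaken (hK ⟨s, Ioo_subset_Icc_self hs, rfl⟩)).lipschitzOnWith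
  have hmem : ∀ s ∈ ({t, t₀} : Set ℝ), s ∈ I := by
    simp only [mem_insert_iff, mem_singleton_iff, I, mem_Ioo]
    grind
  exact ODE_solution_unique_of_mem_Ioo hlip (hmem t₀ (by simp)) (fun s _ => ⟨hf s, trivial⟩)
    (fun s _ => ⟨hg s, trivial⟩) heq (hmem t (by simp))

section

variable {m : Type*} [Fintype m] [DecidableEq m] {A Φ : ℝ → Matrix m m ℝ}

theorem Matrix.continuous_mulLeft_toContinuousLinearMap (hA : Continuous A) :
    Continuous fun t => (LinearMap.mulLeft ℝ (A t)).toContinuousLinearMap :=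
  ((LinearMap.toContinuousLinearMap : _ ≃ₗ[ℝ] (Matrix m m ℝ →L[ℝ] Matrix m m ℝ)).toLinearMap ∘ₗ
    LinearMap.mul ℝ (Matrix m m ℝ)).continuous_of_finiteDimensional.comp hA

theorem Matrix.ODE_solution_unique_mul_left (hA : Continuous A)
    {f g : ℝ → Matrix m m ℝ} (hf : ∀ t, HasDerivAt f (A t * f t) t)
    (hg : ∀ t, HasDerivAt g (A t * g t) t) {t₀ : ℝ} (heq : f t₀ = g t₀) : f = g :=
  ODE_solution_unique_of_continuous_linear (continuous_mulLeft_toContinuousLinearMap hA) hf hg heq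

theorem Matrix.hasDerivAt_mul_mul (B C : Matrix m m ℝ) {f : ℝ → Matrix m m ℝ}
    {f' : Matrix m m ℝ} {t : ℝ} (hf : HasDerivAt f f' t) :
    HasDerivAt (fun τ => B * f τ * C) (B * f' * C) t :=
  (LinearMap.mulRight ℝ C ∘ₗ LinearMap.mulLeft ℝ B).toContinuousLinearMap.hasFDerivAt
    |>.comp_hasDerivAt t hf

theorem Matrix.exp_conj_of_mul_self_eq_one {ρ : Matrix m m ℝ} (hρ : ρ * ρ = 1)
    (X : Matrix m m ℝ) : exp (ρ * X * ρ) = ρ * exp X * ρ := by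
  simpa only [inv_eq_right_inv hρ] using exp_conj ρ X ⟨⟨ρ, ρ, hρ, hρ⟩, rfl⟩

theorem Matrix.exp_neg_mul_of_conj_eq_neg {ρ X : Matrix m m ℝ} (hρ : ρ * ρ = 1)
    (hX : ρ * X * ρ = -X) : exp (-X) * ρ = ρ * exp X := by
  rw [← hX, exp_conj_of_mul_self_eq_one hρ, Matrix.mul_assoc, hρ, Matrix.mul_one]

theorem fundamental_add_period (hA : Continuous A) (hΦ : ∀ τ, HasDerivAt Φ (A τ * Φ τ) τ)
    (hΦ0 : Φ 0 = 1) {T : ℝ} (hper : Function.Periodic A T) (τ : ℝ) : Φ (τ + T) = Φ τ * Φ T := by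
  have hshift : ∀ τ, HasDerivAt (fun τ => Φ (τ + T)) (A τ * Φ (τ + T)) τ := fun τ => by
    rw [← hper τ]
    exact (hΦ (τ + T)).comp_add_const τ T
  have hmul : ∀ τ, HasDerivAt (fun τ => Φ τ * Φ T) (A τ * (Φ τ * Φ T)) τ := fun τ => by
    simpa only [Matrix.one_mul, Matrix.mul_assoc] using hasDerivAt_mul_mul 1 (Φ T) (hΦ τ)
  exact congrFun (ODE_solution_unique_mul_left hA hshift hmul (t₀ := 0) (by simp [hΦ0])) τ

theorem conj_fundamental_neg (hA : Continuous A) (hΦ : ∀ τ, HasDerivAt Φ (A τ * Φ τ) τ)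
    (hΦ0 : Φ 0 = 1) {ρ : Matrix m m ℝ} (hρ : ρ * ρ = 1) (hrev : ∀ θ, ρ * A θ * ρ = -A (-θ))
    (τ : ℝ) : ρ * Φ (-τ) * ρ = Φ τ := by
  have hρρ : ∀ X : Matrix m m ℝ, ρ * (ρ * X) = X := fun X => by
    rw [← Matrix.mul_assoc, hρ, Matrix.one_mul]
  have hconj : ∀ τ, HasDerivAt (fun τ => ρ * Φ (-τ) * ρ) (A τ * (ρ * Φ (-τ) * ρ)) τ := fun τ => by
    have hreflect : HasDerivAt (fun τ => Φ (-τ)) ((-1 : ℝ) • (A (-τ) * Φ (-τ))) τ :=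
      (hΦ (-τ)).scomp τ (hasDerivAt_neg τ)
    convert hasDerivAt_mul_mul ρ ρ hreflect using 1
    rw [neg_one_smul, ← neg_neg (A τ), ← neg_neg τ, ← hrev, neg_neg]
    simp only [Matrix.neg_mul, Matrix.mul_neg, Matrix.mul_assoc, hρρ]
  exact congrFun (ODE_solution_unique_mul_left hA hconj hΦ (t₀ := 0) (by simp [hΦ0, hρ])) τ

end

/-- Under the reversibility hypothesis `ρ A(θ) ρ = -A(-θ)`, if the logarithm
`Ā` of the monodromy `Φ(1)` is chosen in a set `Ω` on which `exp` is injective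
and which satisfies `-Ω ⊆ Ω` and `ρ Ω ρ ⊆ Ω`, then `ρ Ā ρ = -Ā`, and
consequently `exp(-τ Ā) ρ = ρ exp(τ Ā)` for all `τ`. -/
theorem stmt_5 (n : ℕ)
    (A : ℝ → Matrix (Fin n) (Fin n) ℝ)
    (hA : Continuous A)
    (hAper : ∀ τ, A (τ + 1) = A τ)
    (ρ : Matrix (Fin n) (Fin n) ℝ)
    (hρ : ρ * ρ = 1)
    (hrev : ∀ θ : ℝ, ρ * A θ * ρ = -A (-θ))
    (Φ : ℝ → Matrix (Fin n) (Fin n) ℝ)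
    (hΦ : ∀ τ, HasDerivAt Φ (A τ * Φ τ) τ)
    (hΦ0 : Φ 0 = 1)
    (Ω : Set (Matrix (Fin n) (Fin n) ℝ))
    (hinj : Set.InjOn (exp) Ω)
    (hneg : ∀ X ∈ Ω, -X ∈ Ω)
    (hconj : ∀ X ∈ Ω, ρ * X * ρ ∈ Ω)
    (Abar : Matrix (Fin n) (Fin n) ℝ)
    (hmem : Abar ∈ Ω)
    (hAbar : exp Abar = Φ 1) :
    ρ * Abar * ρ = -Abar ∧
      ∀ τ : ℝ, exp (-(τ • Abar)) * ρ = ρ * exp (τ • Abar) := by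
  have hΦinv : Φ (-1) * Φ 1 = 1 := by
    simpa [hΦ0] using (fundamental_add_period hA hΦ hΦ0 hAper (-1)).symm
  have hexp : exp (ρ * -Abar * ρ) = exp Abar := by
    rw [exp_conj_of_mul_self_eq_one hρ, Matrix.exp_neg, hAbar, inv_eq_left_inv hΦinv,
      conj_fundamental_neg hA hΦ hΦ0 hρ hrev]
  have hρAbar : ρ * Abar * ρ = -Abar := by
    have hneg_conj : ρ * -Abar * ρ = Abar := hinj (hconj _ (hneg _ hmem)) hmem hexp
    rw [Matrix.mul_neg, Matrix.neg_mul] at hneg_conj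
    exact neg_eq_iff_eq_neg.mp hneg_conj
  refine ⟨hρAbar, fun τ => exp_neg_mul_of_conj_eq_neg hρ ?_⟩
  rw [Matrix.mul_smul, Matrix.smul_mul, hρAbar, smul_neg]
end

section
/- Consider the nonholonomically coupled system with Lagrangian L(x,z,ẋ,ż) = ½ẋᵀẋ + ½ż² - U(x) - V(z) and constraint a(z)·ẋ = 0, where a(z) ∈ ℝ^{n-1} is a unit vector spanning the kernel of the constraint. Along any solution of the constrained equations of motion, the variable v := ẋᵀk(z), where k(z) is the unit kernel vector, satisfies v̇ = k(z)ᵀF(x) with F(x) = -∇U(x), and ẋ = v·k(z). -/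
open Matrix

private lemma dot_hasDerivAt {n : ℕ} {f g : ℝ → Fin n → ℝ} {f' g' : Fin n → ℝ} {t : ℝ}
    (hf : HasDerivAt f f' t) (hg : HasDerivAt g g' t) :
    HasDerivAt (fun s => f s ⬝ᵥ g s) (f' ⬝ᵥ g t + f t ⬝ᵥ g') t := by
  have hf' := hasDerivAt_pi.mp hf
  have hg' := hasDerivAt_pi.mp hg
  simp only [dotProduct]
  rw [← Finset.sum_add_distrib]
  exact HasDerivAt.fun_sum fun i _ => ((hf' i).mul (hg' i))

/-- For a nonholonomically coupled system with Lagrangian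
`½ ẋᵀẋ + ½ ż² - U(x) - V(z)` and constraint `A(z) ẋ = 0`, whose kernel is
spanned by the unit vector `k(z)`, along any solution of the constrained
equations of motion the variable `v = ẋᵀ k(z)` satisfies
`v̇ = k(z)ᵀ F(x)` with `F = -∇U`, and `ẋ = v • k(z)`. -/
theorem stmt_7 (n r : ℕ)
    (A : ℝ → Matrix (Fin r) (Fin n) ℝ)
    (k : ℝ → Fin n → ℝ)
    (hk_smooth : ContDiff ℝ (⊤ : ℕ∞) k)
    (hk_unit : ∀ s : ℝ, k s ⬝ᵥ k s = 1)
    (hk_ker : ∀ s : ℝ, A s *ᵥ k s = 0)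
    (hk_span : ∀ (s : ℝ) (w : Fin n → ℝ), A s *ᵥ w = 0 → ∃ c : ℝ, w = c • k s)
    (U : (Fin n → ℝ) → ℝ) (V : ℝ → ℝ)
    (F : (Fin n → ℝ) → Fin n → ℝ)
    -- `F = -∇U`, componentwise
    (hF : ∀ (p : Fin n → ℝ) (i : Fin n),
      HasDerivAt (fun s => U (Function.update p i s)) (-(F p i)) (p i))
    -- a solution of the constrained equations of motion
    (x x' : ℝ → Fin n → ℝ) (z z' : ℝ → ℝ) (lam : ℝ → Fin r → ℝ)
    (hx : ∀ t, HasDerivAt x (x' t) t)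
    (hx' : ∀ t, HasDerivAt x' (F (x t) + (A (z t))ᵀ *ᵥ lam t) t)
    (hz : ∀ t, HasDerivAt z (z' t) t)
    (hz' : ∀ t, HasDerivAt z' (-deriv V (z t)) t)
    (hcon : ∀ t, A (z t) *ᵥ x' t = 0) :
    ∀ t : ℝ,
      x' t = (x' t ⬝ᵥ k (z t)) • k (z t) ∧
      HasDerivAt (fun s => x' s ⬝ᵥ k (z s)) (k (z t) ⬝ᵥ F (x t)) t := by
  -- k has a derivative everywhere
  have hkdiff : ∀ s, HasDerivAt k (deriv k s) s := fun s =>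
    ((hk_smooth.differentiable (by simp)) s).hasFDerivAt.hasDerivAt.congr_deriv rfl
  -- k ⬝ deriv k = 0
  have hkk : ∀ s : ℝ, k s ⬝ᵥ deriv k s = 0 := by
    intro s
    have h1 : HasDerivAt (fun u => k u ⬝ᵥ k u)
        (deriv k s ⬝ᵥ k s + k s ⬝ᵥ deriv k s) s :=
      dot_hasDerivAt (hkdiff s) (hkdiff s)
    have h2 : HasDerivAt (fun u => k u ⬝ᵥ k u) 0 s := by
      have : (fun u => k u ⬝ᵥ k u) = fun _ => (1:ℝ) := funext hk_unit
      rw [this]; exact hasDerivAt_const _ _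
    have := h1.unique h2
    rw [dotProduct_comm] at this
    linarith
  intro t
  -- first part
  have hxk : x' t = (x' t ⬝ᵥ k (z t)) • k (z t) := by
    obtain ⟨c, hc⟩ := hk_span (z t) (x' t) (hcon t)
    rw [hc, smul_dotProduct, hk_unit, smul_eq_mul, mul_one]
  refine ⟨hxk, ?_⟩
  -- derivative of k(z ·)
  have hkz : ∀ u : ℝ, HasDerivAt (fun s => k (z s)) (z' u • deriv k (z u)) u := by
    intro u
    exact (hkdiff (z u)).scomp u (hz u)
  have hd : HasDerivAt (fun s => x' s ⬝ᵥ k (z s))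
      ((F (x t) + (A (z t))ᵀ *ᵥ lam t) ⬝ᵥ k (z t)
        + x' t ⬝ᵥ (z' t • deriv k (z t))) t :=
    dot_hasDerivAt (hx' t) (hkz t)
  convert hd using 1
  have h1 : ((A (z t))ᵀ *ᵥ lam t) ⬝ᵥ k (z t) = 0 := by
    rw [dotProduct_comm, dotProduct_mulVec, vecMul_transpose, hk_ker, zero_dotProduct]
  have h2 : x' t ⬝ᵥ (z' t • deriv k (z t)) = 0 := by
    rw [hxk, smul_dotProduct, dotProduct_smul, hkk, smul_zero, smul_zero]
  rw [add_dotProduct, h1, h2, add_zero, add_zero, dotProduct_comm]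
end

section
/- For a nonholonomically coupled system with quadratic potential U(x) = ½xᵀKx - fᵀx, K = BᵀB with B of full rank m×(n-1), setting y = Bx, b(z) = Bk(z), the reduced dynamics (y, v) satisfy ẏ = b(z)v, v̇ = -b(z)ᵀy + k(z)ᵀf. Equivalently, with an auxiliary variable ε with ε(0)=1 and ε̇=0, the vector (y, v, ε) evolves by a matrix lying in the Lie algebra 𝔰𝔢(m+1) of SO(m+1) ⋉ ℝ^{m+1}. -/
open Matrix

/-- The skew-symmetric `(m+1)×(m+1)` block matrix `[[0, b],[-bᵀ, 0]]`. -/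
def cvtSkewBlock {m : ℕ} (b : Fin m → ℝ) :
    Matrix (Fin m ⊕ Unit) (Fin m ⊕ Unit) ℝ :=
  Matrix.fromBlocks 0 (Matrix.replicateCol Unit b) (-(Matrix.replicateRow Unit b)) 0

/-- The augmented coefficient matrix `[[0, b, 0],[-bᵀ, 0, c],[0, 0, 0]]`,
an element of `𝔰𝔢(m+1)`, the Lie algebra of `SO(m+1) ⋉ ℝ^{m+1}`. -/
def seMatrix {m : ℕ} (b : Fin m → ℝ) (c : ℝ) :
    Matrix ((Fin m ⊕ Unit) ⊕ Unit) ((Fin m ⊕ Unit) ⊕ Unit) ℝ :=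
  Matrix.fromBlocks (cvtSkewBlock b)
    (Matrix.replicateCol Unit (Sum.elim 0 fun _ => c)) 0 0

/-!
The force enters the equation for `v` only through `kᵀ Bᵀ B x = (B k)ᵀ (B x)`, so `(B x, v)`
solves a closed affine system. Appending the constant coordinate `ε = 1` turns the affine term
`kᵀ f` into a column of a linear system whose upper-left block `[[0, b], [-bᵀ, 0]]` is skew.
-/

namespace Matrix

theorem dotProduct_transpose_mul_self_mulVec {m n R : Type*} [Fintype m] [Fintype n]
    [CommSemiring R] (B : Matrix m n R) (k x : n → R) :
    k ⬝ᵥ (Bᵀ * B) *ᵥ x = (B *ᵥ k) ⬝ᵥ (B *ᵥ x) := by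
  rw [← mulVec_mulVec, dotProduct_transpose_mulVec, dotProduct_comm]

end Matrix

theorem HasDerivAt.mulVec {𝕜 m n : Type*} [NontriviallyNormedField 𝕜] [CompleteSpace 𝕜]
    [Fintype m] [Fintype n] (B : Matrix m n 𝕜) {x : 𝕜 → n → 𝕜} {x' : n → 𝕜} {t : 𝕜}
    (hx : HasDerivAt x x' t) :
    HasDerivAt (fun s => B *ᵥ x s) (B *ᵥ x') t :=
  (Matrix.mulVecLin B).toContinuousLinearMap.hasFDerivAt.comp_hasDerivAt t hx

theorem HasDerivAt.sumElim {𝕜 ι κ : Type*} [NontriviallyNormedField 𝕜] [Fintype ι] [Fintype κ]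
    {f : 𝕜 → ι → 𝕜} {g : 𝕜 → κ → 𝕜} {f' : ι → 𝕜} {g' : κ → 𝕜} {t : 𝕜}
    (hf : HasDerivAt f f' t) (hg : HasDerivAt g g' t) :
    HasDerivAt (fun s => Sum.elim (f s) (g s)) (Sum.elim f' g') t := by
  rw [hasDerivAt_pi] at hf hg ⊢
  rintro (i | j)
  exacts [hf i, hg j]

theorem HasDerivAt.pi_const {𝕜 ι : Type*} [NontriviallyNormedField 𝕜] [Fintype ι]
    {v : 𝕜 → 𝕜} {v' t : 𝕜} (hv : HasDerivAt v v' t) : HasDerivAt (fun s (_ : ι) => v s) (fun _ => v') t :=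
  hasDerivAt_pi.2 fun _ => hv

theorem cvtSkewBlock_transpose {m : ℕ} (b : Fin m → ℝ) :
    (cvtSkewBlock b)ᵀ = -cvtSkewBlock b := by
  simp [cvtSkewBlock, fromBlocks_transpose, fromBlocks_neg]

theorem seMatrix_mulVec {m : ℕ} (b y : Fin m → ℝ) (c v : ℝ) :
    seMatrix b c *ᵥ Sum.elim (Sum.elim y fun _ => v) (fun _ => 1) =
      Sum.elim (Sum.elim (v • b) fun _ => -(b ⬝ᵥ y) + c) fun _ => 0 := by
  ext ((i | _) | _) <;>
    simp [seMatrix, cvtSkewBlock, mulVec, dotProduct, mul_comm]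

theorem stmt_10_general (n m : ℕ)
    (B : Matrix (Fin m) (Fin n) ℝ)
    (f : Fin n → ℝ)
    (k : ℝ → Fin n → ℝ)
    (x : ℝ → Fin n → ℝ) (v : ℝ → ℝ) (z : ℝ → ℝ)
    (hx : ∀ t, HasDerivAt x (v t • k (z t)) t)
    (hv : ∀ t, HasDerivAt v (k (z t) ⬝ᵥ (-((Bᵀ * B) *ᵥ x t) + f)) t)
    (w : ℝ → (Fin m ⊕ Unit) ⊕ Unit → ℝ)
    (hw : ∀ t, w t = Sum.elim (Sum.elim (B *ᵥ x t) fun _ => v t) fun _ => 1) :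
    ∀ t : ℝ,
      HasDerivAt (fun s => B *ᵥ x s) (v t • (B *ᵥ k (z t))) t ∧
      HasDerivAt v (-((B *ᵥ k (z t)) ⬝ᵥ (B *ᵥ x t)) + k (z t) ⬝ᵥ f) t ∧
      (cvtSkewBlock (B *ᵥ k (z t)))ᵀ = -cvtSkewBlock (B *ᵥ k (z t)) ∧
      HasDerivAt w (seMatrix (B *ᵥ k (z t)) (k (z t) ⬝ᵥ f) *ᵥ w t) t := by
  intro t
  have hy : HasDerivAt (fun s => B *ᵥ x s) (v t • (B *ᵥ k (z t))) t := by
    simpa only [mulVec_smul] using (hx t).mulVec B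
  have hv' : HasDerivAt v (-((B *ᵥ k (z t)) ⬝ᵥ (B *ᵥ x t)) + k (z t) ⬝ᵥ f) t := by
    simpa only [dotProduct_add, dotProduct_neg, dotProduct_transpose_mul_self_mulVec] using hv t
  refine ⟨hy, hv', cvtSkewBlock_transpose _, ?_⟩
  rw [funext hw, seMatrix_mulVec]
  exact (hy.sumElim hv'.pi_const).sumElim (hasDerivAt_const t 1).pi_const

/-- For a nonholonomically coupled system with quadratic potential
`U(x) = ½ xᵀ K x - fᵀ x`, `K = Bᵀ B`, with `y = B x` and `b(z) = B k(z)`,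
the reduced dynamics satisfy `ẏ = b(z) v`, `v̇ = -b(z)ᵀ y + k(z)ᵀ f`;
equivalently, with an auxiliary variable `ε ≡ 1`, the vector `(y, v, ε)`
evolves by a matrix lying in `𝔰𝔢(m+1)`. -/
theorem stmt_10 (n m : ℕ)
    (B : Matrix (Fin m) (Fin n) ℝ)
    (hB : B.rank = m)
    (f : Fin n → ℝ)
    (k : ℝ → Fin n → ℝ)
    (x : ℝ → Fin n → ℝ) (v : ℝ → ℝ) (z : ℝ → ℝ)
    (hx : ∀ t, HasDerivAt x (v t • k (z t)) t)
    (hv : ∀ t, HasDerivAt v (k (z t) ⬝ᵥ (-((Bᵀ * B) *ᵥ x t) + f)) t)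
    (w : ℝ → (Fin m ⊕ Unit) ⊕ Unit → ℝ)
    (hw : ∀ t, w t = Sum.elim (Sum.elim (B *ᵥ x t) fun _ => v t) fun _ => 1) :
    ∀ t : ℝ,
      HasDerivAt (fun s => B *ᵥ x s) (v t • (B *ᵥ k (z t))) t ∧
      HasDerivAt v (-((B *ᵥ k (z t)) ⬝ᵥ (B *ᵥ x t)) + k (z t) ⬝ᵥ f) t ∧
      (cvtSkewBlock (B *ᵥ k (z t)))ᵀ = -cvtSkewBlock (B *ᵥ k (z t)) ∧
      HasDerivAt w (seMatrix (B *ᵥ k (z t)) (k (z t) ⬝ᵥ f) *ᵥ w t) t :=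
  stmt_10_general n m B f k x v z hx hv w hw
end

section
/- Consider the implicit midpoint-type discrete derivative (DD) scheme for the nonholonomic system: q₁ = q₀ + h(q̇₀+q̇₁)/2, q̇₁ = q̇₀ + h(V(q₁) - V(q₀) - ∇V(q̄)·(q₁-q₀) + A(q̄)ᵀλ) with q̄ = (q₀+q₁)/2 and constraint A(q̄)(q̇₀+q̇₁)/2 = 0. Then the total energy H(q,q̇) = ½‖q̇‖² + V(q) is exactly conserved: H(q₁,q̇₁) = H(q₀,q̇₀). -/
open Matrix

/-- The discrete derivative (DD) integrator for a nonholonomic system with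
Lagrangian `½‖q̇‖² - V(q)` and constraint `A(q)q̇ = 0` exactly conserves the
total energy `H(q,q̇) = ½‖q̇‖² + V(q)`.  Here `qbar = (q₀+q₁)/2` and the force
is the Gonzalez discrete gradient
`∇V(q̄) + ((V(q₁)-V(q₀)-∇V(q̄)·(q₁-q₀))/‖q₁-q₀‖²)(q₁-q₀)`. -/
theorem stmt_16 (d r : ℕ) (hstep : ℝ)
    (V : (Fin d → ℝ) → ℝ)
    (gradV : (Fin d → ℝ) → Fin d → ℝ)
    (A : (Fin d → ℝ) → Matrix (Fin r) (Fin d) ℝ)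
    (q₀ q₁ v₀ v₁ : Fin d → ℝ) (lam : Fin r → ℝ)
    (qbar : Fin d → ℝ) (hqbar : qbar = (1 / 2 : ℝ) • (q₀ + q₁))
    (hne : q₁ ≠ q₀)
    (hpos : q₁ = q₀ + (hstep / 2) • (v₀ + v₁))
    (hvel : v₁ = v₀ - hstep •
      (gradV qbar +
        ((V q₁ - V q₀ - gradV qbar ⬝ᵥ (q₁ - q₀)) / ((q₁ - q₀) ⬝ᵥ (q₁ - q₀))) •
          (q₁ - q₀) +
        (A qbar)ᵀ *ᵥ lam))
    (hcon : A qbar *ᵥ ((1 / 2 : ℝ) • (v₀ + v₁)) = 0) :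
    (1 / 2) * (v₁ ⬝ᵥ v₁) + V q₁ = (1 / 2) * (v₀ ⬝ᵥ v₀) + V q₀ := by
  set F := gradV qbar +
      ((V q₁ - V q₀ - gradV qbar ⬝ᵥ (q₁ - q₀)) / ((q₁ - q₀) ⬝ᵥ (q₁ - q₀))) •
        (q₁ - q₀) +
      (A qbar)ᵀ *ᵥ lam with hF
  have hdq : q₁ - q₀ = hstep • ((1 / 2 : ℝ) • (v₀ + v₁)) := by
    rw [hpos]; ext i; simp [Pi.smul_apply]; ring
  have hAdq : ((A qbar)ᵀ *ᵥ lam) ⬝ᵥ (q₁ - q₀) = 0 := by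
    rw [hdq, dotProduct_smul, Matrix.mulVec_transpose, ← Matrix.dotProduct_mulVec,
      hcon, dotProduct_zero, smul_zero]
  have hnn : (q₁ - q₀) ⬝ᵥ (q₁ - q₀) ≠ 0 := by
    intro h
    exact hne (sub_eq_zero.mp (dotProduct_self_eq_zero.mp h))
  have hFdq : F ⬝ᵥ (q₁ - q₀) = V q₁ - V q₀ := by
    rw [hF, add_dotProduct, add_dotProduct, smul_dotProduct, hAdq,
      smul_eq_mul, div_mul_cancel₀ _ hnn]
    ring
  have hvsum : v₁ - v₀ = -(hstep • F) := by rw [hvel]; ext i; simp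
  have hkey : v₁ ⬝ᵥ v₁ - v₀ ⬝ᵥ v₀ = (v₁ - v₀) ⬝ᵥ (v₀ + v₁) := by
    rw [sub_dotProduct, dotProduct_add, dotProduct_add, dotProduct_comm v₀ v₁]
    ring
  have h2 : (v₁ - v₀) ⬝ᵥ (v₀ + v₁) = -2 * (F ⬝ᵥ (q₁ - q₀)) := by
    rw [hvsum, hdq, neg_dotProduct, smul_dotProduct, dotProduct_smul,
      dotProduct_smul]
    simp only [smul_eq_mul]
    ring
  have := hFdq
  have : v₁ ⬝ᵥ v₁ - v₀ ⬝ᵥ v₀ = -2 * (V q₁ - V q₀) := by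
    rw [hkey, h2, hFdq]
  linarith
end
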